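/- Every infinite graph inverse semigroup G(E) admits a unique compact non-discrete Hausdorff shift-continuous topology, namely the topology in which every nonzero element is isolated and neighborhoods of 0 are the cofinite sets containing 0; moreover, with this topology the inversion map is continuous. -/

import Mathlib

/-- A directed graph: vertices, edges, source and range maps. -/
structure DGraph where
  V : Type
  E : Type
  s : E → V
  r : E → V

namespace DGraph

variable {Q : DGraph}

/-- `pOk Q a l` : the list of edges `l` forms a valid path starting at vertex `a`. -/
def pOk (Q : DGraph) : Q.V → List Q.E → Prop
  | _, [] => True
  | a, e :: l => Q.s e = a ∧ pOk Q (Q.r e) l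

/-- The end vertex of an edge-list starting at `a`. -/
def pRng (Q : DGraph) (a : Q.V) (l : List Q.E) : Q.V :=
  l.foldl (fun _ e => Q.r e) a

theorem pRng_append (a : Q.V) (l₁ l₂ : List Q.E) :
    pRng Q a (l₁ ++ l₂) = pRng Q (pRng Q a l₁) l₂ :=
  List.foldl_append

theorem pOk_append {a : Q.V} {l₁ l₂ : List Q.E} (h₁ : pOk Q a l₁)
    (h₂ : pOk Q (pRng Q a l₁) l₂) : pOk Q a (l₁ ++ l₂) := by
  induction l₁ generalizing a with
  | nil => simpa [pRng] using h₂
  | cons e l ih =>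
      obtain ⟨he, hl⟩ := h₁
      exact ⟨he, ih hl h₂⟩

theorem pOk_drop {a : Q.V} {l₁ l₂ : List Q.E} (h : pOk Q a (l₁ ++ l₂)) :
    pOk Q (pRng Q a l₁) l₂ := by
  induction l₁ generalizing a with
  | nil => simpa [pRng] using h
  | cons e l ih => exact ih h.2

/-- A (finite, directed) path in the graph `Q`: a start vertex together with a
compatible list of edges.  Paths of length `0` are vertices. -/
structure GPath (Q : DGraph) where
  start : Q.V
  edges : List Q.E
  ok : pOk Q start edges

/-- The source `s(p)` of a path. -/
def GPath.src (p : GPath Q) : Q.V := p.start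

/-- The range `r(p)` of a path. -/
def GPath.rng (p : GPath Q) : Q.V := pRng Q p.start p.edges

/-- The length `|p|` of a path. -/
def GPath.length (p : GPath Q) : ℕ := p.edges.length

/-- The trivial (length zero) path at a vertex `a`. -/
def GPath.triv (Q : DGraph) (a : Q.V) : GPath Q := ⟨a, [], trivial⟩

/-- Concatenation of composable paths. -/
def GPath.comp (p q : GPath Q) (h : p.rng = q.start) : GPath Q :=
  ⟨p.start, p.edges ++ q.edges, pOk_append p.ok (by
    have hq := q.ok
    rw [← h] at hq
    exact hq)⟩

theorem GPath.comp_rng (p q : GPath Q) (h : p.rng = q.start) :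
    (p.comp q h).rng = q.rng := by
  show pRng Q p.start (p.edges ++ q.edges) = q.rng
  rw [pRng_append, show pRng Q p.start p.edges = q.start from h]
  rfl

theorem exists_sub {p q : GPath Q} (h1 : q.start = p.start)
    (h2 : p.edges <+: q.edges) :
    ∃ w : GPath Q, w.start = p.rng ∧ w.rng = q.rng ∧ p.edges ++ w.edges = q.edges := by
  obtain ⟨t, ht⟩ := h2
  have hok : pOk Q p.start (p.edges ++ t) := by rw [ht, ← h1]; exact q.ok
  refine ⟨⟨p.rng, t, pOk_drop hok⟩, rfl, ?_, ht⟩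
  show pRng Q (pRng Q p.start p.edges) t = pRng Q q.start q.edges
  rw [← pRng_append, ht, ← h1]

/-- If the path `q` decomposes as `p·w`, this is the path `w`. -/
noncomputable def subPath (p q : GPath Q) (h1 : q.start = p.start)
    (h2 : p.edges <+: q.edges) : GPath Q :=
  (exists_sub h1 h2).choose

theorem subPath_spec (p q : GPath Q) (h1 : q.start = p.start)
    (h2 : p.edges <+: q.edges) :
    (subPath p q h1 h2).start = p.rng ∧ (subPath p q h1 h2).rng = q.rng ∧
      p.edges ++ (subPath p q h1 h2).edges = q.edges :=
  (exists_sub h1 h2).choose_spec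

/-- The graph inverse semigroup `G(E)` over the graph `Q`: the element `0`
together with the elements `u v⁻¹` where `u, v` are paths with `r(u) = r(v)`. -/
inductive GIS (Q : DGraph) : Type
  | zero : GIS Q
  | elm (u v : GPath Q) (h : u.rng = v.rng) : GIS Q

instance : Zero (GIS Q) := ⟨GIS.zero⟩

-- Multiplication in the graph inverse semigroup:
-- `u₁v₁⁻¹ · u₂v₂⁻¹ = u₁wv₂⁻¹` if `u₂ = v₁w`, `u₁(v₂w)⁻¹` if `v₁ = u₂w`, `0` otherwise.
open Classical in
noncomputable def GIS.mul : GIS Q → GIS Q → GIS Q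
  | .zero, _ => .zero
  | _, .zero => .zero
  | .elm u₁ v₁ h₁, .elm u₂ v₂ h₂ =>
    if hA : u₂.start = v₁.start ∧ v₁.edges <+: u₂.edges then
      GIS.elm (u₁.comp (subPath v₁ u₂ hA.1 hA.2)
          (by rw [(subPath_spec v₁ u₂ hA.1 hA.2).1, h₁]))
        v₂
        (by rw [GPath.comp_rng, (subPath_spec v₁ u₂ hA.1 hA.2).2.1, h₂])
    else if hB : v₁.start = u₂.start ∧ u₂.edges <+: v₁.edges then
      GIS.elm u₁
        (v₂.comp (subPath u₂ v₁ hB.1 hB.2)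
          (by rw [(subPath_spec u₂ v₁ hB.1 hB.2).1, h₂]))
        (by rw [GPath.comp_rng, (subPath_spec u₂ v₁ hB.1 hB.2).2.1, h₁])
    else .zero

noncomputable instance : Mul (GIS Q) := ⟨GIS.mul⟩

/-- The inversion map of the graph inverse semigroup: `(uv⁻¹)⁻¹ = vu⁻¹`, `0⁻¹ = 0`. -/
def GIS.inv : GIS Q → GIS Q
  | .zero => .zero
  | .elm u v h => .elm v u h.symm

/-- The canonical identification of a path `u` with the element `u · r(u)⁻¹` of `G(E)`. -/
def toGIS (p : GPath Q) : GIS Q := GIS.elm p (GPath.triv Q p.rng) rfl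

end DGraph


namespace DGraph
/-- The topology on `G(E)` in which every nonzero element is isolated and the
neighborhoods of `0` are the cofinite sets containing `0`. -/
def cofTop (Q : DGraph) : TopologicalSpace (GIS Q) where
  IsOpen U := (0 : GIS Q) ∈ U → Uᶜ.Finite
  isOpen_univ := fun _ => by simp
  isOpen_inter := fun U V hU hV h => by
    rw [Set.compl_inter]
    exact (hU h.1).union (hV h.2)
  isOpen_sUnion := fun S hS h => by
    obtain ⟨U, hUS, h0U⟩ := h
    exact (hS U hUS h0U).subset
      (Set.compl_subset_compl.mpr (Set.subset_sUnion_of_mem hUS))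
end DGraph

open DGraph
open Topology

----------------------------------------------------------------
-- auxiliary development
----------------------------------------------------------------
namespace DGraph
variable {Q : DGraph}

theorem GPath.ext' {p q : GPath Q} (h1 : p.start = q.start) (h2 : p.edges = q.edges) :
    p = q := by
  cases p; cases q; simp_all

theorem elm_ext {u v u' v' : GPath Q} {h h'} (hu : u = u') (hv : v = v') :
    GIS.elm u v h = GIS.elm u' v' h' := by subst hu; subst hv; rfl

@[simp] theorem triv_start (a : Q.V) : (GPath.triv Q a).start = a := rfl
@[simp] theorem triv_edges (a : Q.V) : (GPath.triv Q a).edges = [] := rfl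
@[simp] theorem triv_rng (a : Q.V) : (GPath.triv Q a).rng = a := rfl
@[simp] theorem comp_start (p q : GPath Q) (h) : (p.comp q h).start = p.start := rfl
@[simp] theorem comp_edges (p q : GPath Q) (h) : (p.comp q h).edges = p.edges ++ q.edges := rfl

theorem subPath_start (p q : GPath Q) (h1 h2) : (subPath p q h1 h2).start = p.rng :=
  (subPath_spec p q h1 h2).1

theorem subPath_edges (p q : GPath Q) (h1 h2) :
    (subPath p q h1 h2).edges = q.edges.drop p.edges.length := by
  conv_rhs => rw [← (subPath_spec p q h1 h2).2.2]
  rw [List.drop_left]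

theorem zero_ne_elm {u v : GPath Q} {h} : (GIS.zero : GIS Q) ≠ GIS.elm u v h := by
  exact fun hc => by cases hc

@[simp] theorem mul_zero' (x : GIS Q) : GIS.mul x GIS.zero = GIS.zero := by
  cases x <;> rfl

@[simp] theorem zero_mul' (x : GIS Q) : GIS.mul GIS.zero x = GIS.zero := by
  cases x <;> rfl

theorem mul_def_A {u₁ v₁ u₂ v₂ : GPath Q} {h₁ h₂}
    (hA : u₂.start = v₁.start ∧ v₁.edges <+: u₂.edges) :
    GIS.mul (GIS.elm u₁ v₁ h₁) (GIS.elm u₂ v₂ h₂) =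
      GIS.elm (u₁.comp (subPath v₁ u₂ hA.1 hA.2)
          (by rw [(subPath_spec v₁ u₂ hA.1 hA.2).1, h₁]))
        v₂
        (by rw [GPath.comp_rng, (subPath_spec v₁ u₂ hA.1 hA.2).2.1, h₂]) := by
  simp only [GIS.mul]
  rw [dif_pos hA]

theorem mul_def_B {u₁ v₁ u₂ v₂ : GPath Q} {h₁ h₂}
    (hA : ¬(u₂.start = v₁.start ∧ v₁.edges <+: u₂.edges))
    (hB : v₁.start = u₂.start ∧ u₂.edges <+: v₁.edges) :
    GIS.mul (GIS.elm u₁ v₁ h₁) (GIS.elm u₂ v₂ h₂) =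
      GIS.elm u₁
        (v₂.comp (subPath u₂ v₁ hB.1 hB.2)
          (by rw [(subPath_spec u₂ v₁ hB.1 hB.2).1, h₂]))
        (by rw [GPath.comp_rng, (subPath_spec u₂ v₁ hB.1 hB.2).2.1, h₁]) := by
  simp only [GIS.mul]
  rw [dif_neg hA, dif_pos hB]

theorem mul_def_0 {u₁ v₁ u₂ v₂ : GPath Q} {h₁ h₂}
    (hA : ¬(u₂.start = v₁.start ∧ v₁.edges <+: u₂.edges))
    (hB : ¬(v₁.start = u₂.start ∧ u₂.edges <+: v₁.edges)) :
    GIS.mul (GIS.elm u₁ v₁ h₁) (GIS.elm u₂ v₂ h₂) = GIS.zero := by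
  simp only [GIS.mul]
  rw [dif_neg hA, dif_neg hB]

theorem mul_ne_zero_cases {u₁ v₁ u₂ v₂ : GPath Q} {h₁ h₂}
    (h : GIS.mul (GIS.elm u₁ v₁ h₁) (GIS.elm u₂ v₂ h₂) ≠ GIS.zero) :
    u₂.start = v₁.start ∧ (v₁.edges <+: u₂.edges ∨ u₂.edges <+: v₁.edges) := by
  by_cases hA : u₂.start = v₁.start ∧ v₁.edges <+: u₂.edges
  · exact ⟨hA.1, Or.inl hA.2⟩
  by_cases hB : v₁.start = u₂.start ∧ u₂.edges <+: v₁.edges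
  · exact ⟨hB.1.symm, Or.inr hB.2⟩
  exact absurd (mul_def_0 hA hB) h

@[simp] theorem inv_zero' : (GIS.zero : GIS Q).inv = GIS.zero := rfl

@[simp] theorem inv_inv' (x : GIS Q) : x.inv.inv = x := by cases x <;> rfl

theorem inv_injective : Function.Injective (GIS.inv : GIS Q → GIS Q) :=
  Function.LeftInverse.injective inv_inv'

theorem subPath_self_edges (p : GPath Q) (h1 h2) : (subPath p p h1 h2).edges = [] := by
  simp [subPath_edges]

theorem inv_eq_zero_iff {x : GIS Q} : x.inv = GIS.zero ↔ x = GIS.zero := by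
  cases x with
  | zero => exact Iff.rfl
  | elm u v h => exact ⟨fun hc => (by cases hc), fun hc => (by cases hc)⟩

theorem inv_mul' (x y : GIS Q) : (GIS.mul x y).inv = GIS.mul y.inv x.inv := by
  cases x with
  | zero => simp
  | elm u₁ v₁ h₁ =>
    cases y with
    | zero => simp
    | elm u₂ v₂ h₂ =>
      show (GIS.mul (GIS.elm u₁ v₁ h₁) (GIS.elm u₂ v₂ h₂)).inv =
        GIS.mul (GIS.elm v₂ u₂ h₂.symm) (GIS.elm v₁ u₁ h₁.symm)
      by_cases hA : u₂.start = v₁.start ∧ v₁.edges <+: u₂.edges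
      · by_cases hB : v₁.start = u₂.start ∧ u₂.edges <+: v₁.edges
        · -- both branches hold, so v₁ = u₂
          obtain rfl : v₁ = u₂ := GPath.ext' hA.1.symm (hA.2.eq_of_length_le hB.2.length_le)
          rw [mul_def_A hA, mul_def_A ⟨rfl, hB.2⟩]
          show GIS.elm v₂ _ _ = GIS.elm _ u₁ _
          refine elm_ext ?_ ?_
          · refine GPath.ext' rfl ?_
            show v₂.edges = v₂.edges ++ _
            rw [subPath_self_edges, List.append_nil]
          · refine GPath.ext' rfl ?_
            show u₁.edges ++ _ = u₁.edges
            rw [subPath_self_edges, List.append_nil]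
        · rw [mul_def_A hA, mul_def_B (fun hc => hB ⟨hc.1, hc.2⟩) ⟨hA.1, hA.2⟩]
          rfl
      · by_cases hB : v₁.start = u₂.start ∧ u₂.edges <+: v₁.edges
        · rw [mul_def_B hA hB, mul_def_A ⟨hB.1, hB.2⟩]
          rfl
        · rw [mul_def_0 hA hB, mul_def_0 (fun hc => hB ⟨hc.1, hc.2⟩)
            (fun hc => hA ⟨hc.1, hc.2⟩)]
          rfl


/-- The idempotent `a a⁻¹` at a vertex `a`. -/
noncomputable def eV (Q : DGraph) (a : Q.V) : GIS Q :=
  GIS.elm (GPath.triv Q a) (GPath.triv Q a) rfl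

theorem eV_ne_zero (a : Q.V) : eV Q a ≠ GIS.zero := fun h => by cases h

@[simp] theorem inv_eV (a : Q.V) : (eV Q a).inv = eV Q a := rfl

/-- `p · r(p)⁻¹`. -/
noncomputable def lP (p : GPath Q) : GIS Q := GIS.elm p (GPath.triv Q p.rng) rfl

/-- `r(p) · p⁻¹`. -/
noncomputable def rP (p : GPath Q) : GIS Q := GIS.elm (GPath.triv Q p.rng) p rfl

theorem lP_ne_zero (p : GPath Q) : lP p ≠ GIS.zero := fun h => by cases h
theorem rP_ne_zero (p : GPath Q) : rP p ≠ GIS.zero := fun h => by cases h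

@[simp] theorem inv_lP (p : GPath Q) : (lP p).inv = rP p := rfl
@[simp] theorem inv_rP (p : GPath Q) : (rP p).inv = lP p := rfl

/-- D1 : `e_a · (u v⁻¹) = u v⁻¹` when `s(u) = a`. -/
theorem eV_mul_elm {u v : GPath Q} {h} (hu : u.start = a) :
    GIS.mul (eV Q a) (GIS.elm u v h) = GIS.elm u v h := by
  rw [eV, mul_def_A ⟨hu, List.nil_prefix⟩]
  refine elm_ext (GPath.ext' ?_ ?_) rfl
  · simp [hu]
  · show [] ++ _ = u.edges
    rw [List.nil_append, subPath_edges]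
    simp

/-- D2 : `e_a · (u v⁻¹) = 0` when `s(u) ≠ a`. -/
theorem eV_mul_elm_zero {u v : GPath Q} {h} (hu : u.start ≠ a) :
    GIS.mul (eV Q a) (GIS.elm u v h) = GIS.zero := by
  rw [eV, mul_def_0]
  · exact fun hc => hu (by simpa using hc.1)
  · exact fun hc => hu (by simpa using hc.1.symm)

/-- E1 : `(u v⁻¹) · e_a = u v⁻¹` when `s(v) = a`. -/
theorem elm_mul_eV {u v : GPath Q} {h} (hv : v.start = a) :
    GIS.mul (GIS.elm u v h) (eV Q a) = GIS.elm u v h := by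
  have := congrArg GIS.inv (eV_mul_elm (u := v) (v := u) (h := h.symm) hv)
  rw [inv_mul', inv_eV] at this
  show GIS.mul (GIS.elm v u h.symm).inv (eV Q a) = _
  rw [this]
  rfl

/-- E2 : `(u v⁻¹) · e_a = 0` when `s(v) ≠ a`. -/
theorem elm_mul_eV_zero {u v : GPath Q} {h} (hv : v.start ≠ a) :
    GIS.mul (GIS.elm u v h) (eV Q a) = GIS.zero := by
  have := congrArg GIS.inv (eV_mul_elm_zero (u := v) (v := u) (h := h.symm) hv)
  rw [inv_mul', inv_eV] at this
  show GIS.mul (GIS.elm v u h.symm).inv (eV Q a) = _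
  rw [this]
  rfl

/-- `r(u) u⁻¹ · u v⁻¹ = r(u) v⁻¹`. -/
theorem rP_mul_elm {u v : GPath Q} {h} :
    GIS.mul (rP u) (GIS.elm u v h) = GIS.elm (GPath.triv Q u.rng) v (by simpa using h) := by
  refine (mul_def_A (u₁ := GPath.triv Q u.rng) (v₁ := u) (u₂ := u) (v₂ := v)
    (h₁ := rfl) (h₂ := h) ⟨rfl, List.prefix_refl _⟩).trans ?_
  refine elm_ext (GPath.ext' rfl ?_) rfl
  show [] ++ _ = []
  rw [List.nil_append, subPath_self_edges]

/-- `r(u) v⁻¹ · v r(v)⁻¹ = e_{r u}`. -/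
theorem trivElm_mul_lP {v : GPath Q} {b : Q.V} {h : pRng Q b [] = v.rng} :
    GIS.mul (GIS.elm (GPath.triv Q b) v h) (lP v) = eV Q b := by
  refine (mul_def_A (u₁ := GPath.triv Q b) (v₁ := v) (u₂ := v) (v₂ := GPath.triv Q v.rng)
    (h₁ := h) (h₂ := rfl) ⟨rfl, List.prefix_refl _⟩).trans ?_
  refine elm_ext (GPath.ext' rfl ?_) (GPath.ext' ?_ rfl)
  · show [] ++ _ = []
    rw [List.nil_append, subPath_self_edges]
  · show v.rng = b
    exact (show b = v.rng from h).symm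

theorem chi_self {u v : GPath Q} {h : u.rng = v.rng} :
    GIS.mul (GIS.mul (rP u) (GIS.elm u v h)) (lP v) = eV Q u.rng := by
  rw [rP_mul_elm]
  exact trivElm_mul_lP


/-- Left path edges of a `GIS` element. -/
def lE : GIS Q → List Q.E
  | .zero => []
  | .elm u _ _ => u.edges

/-- Right path edges of a `GIS` element. -/
def rE : GIS Q → List Q.E
  | .zero => []
  | .elm _ v _ => v.edges

/-- Fibers of left translations over nonzero elements are finite. -/
theorem mul_left_fiber_finite (x y : GIS Q) (hy : y ≠ GIS.zero) :
    {z | GIS.mul x z = y}.Finite := by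
  cases x with
  | zero =>
    have : {z | GIS.mul GIS.zero z = y} = ∅ :=
      Set.eq_empty_of_forall_notMem fun z hz => hy (by rw [← hz, zero_mul'])
    rw [this]; exact Set.finite_empty
  | elm u₁ v₁ h₁ =>
    cases y with
    | zero => exact absurd rfl hy
    | elm P R hPR =>
      refine Set.Finite.of_finite_image (f := lE) ?_ ?_
      · refine Set.Finite.subset
          (Set.Finite.insert (v₁.edges ++ P.edges.drop u₁.edges.length)
            (v₁.edges.inits.finite_toSet)) ?_
        rintro b ⟨z, hz, rfl⟩
        cases z with
        | zero => rw [Set.mem_setOf_eq, mul_zero'] at hz; exact absurd hz.symm hy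
        | elm u₂ v₂ h₂ =>
          rw [Set.mem_setOf_eq] at hz
          by_cases hA : u₂.start = v₁.start ∧ v₁.edges <+: u₂.edges
          · left
            rw [mul_def_A hA] at hz
            rw [GIS.elm.injEq] at hz
            have hP : u₁.edges ++ (subPath v₁ u₂ hA.1 hA.2).edges = P.edges := by
              rw [← hz.1]; rfl
            have hw : (subPath v₁ u₂ hA.1 hA.2).edges = P.edges.drop u₁.edges.length := by
              rw [← hP, List.drop_left]
            show u₂.edges = _
            have h22 := (subPath_spec v₁ u₂ hA.1 hA.2).2.2
            rw [← h22, hw]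
          · right
            by_cases hB : v₁.start = u₂.start ∧ u₂.edges <+: v₁.edges
            · show u₂.edges ∈ v₁.edges.inits
              rw [List.mem_inits]
              exact hB.2
            · rw [mul_def_0 hA hB] at hz; exact absurd hz.symm hy
      · rintro z1 hz1 z2 hz2 he
        cases z1 with
        | zero => rw [Set.mem_setOf_eq, mul_zero'] at hz1; exact absurd hz1.symm hy
        | elm u₂ v₂ h₂ =>
          cases z2 with
          | zero => rw [Set.mem_setOf_eq, mul_zero'] at hz2; exact absurd hz2.symm hy
          | elm u₂' v₂' h₂' =>
            rw [Set.mem_setOf_eq] at hz1 hz2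
            have st1 := (mul_ne_zero_cases (h₁ := h₁) (h₂ := h₂)
              (by rw [hz1]; exact fun hc => by cases hc)).1
            have st2 := (mul_ne_zero_cases (h₁ := h₁) (h₂ := h₂')
              (by rw [hz2]; exact fun hc => by cases hc)).1
            obtain rfl : u₂ = u₂' := GPath.ext' (st1.trans st2.symm) he
            by_cases hA : u₂.start = v₁.start ∧ v₁.edges <+: u₂.edges
            · rw [mul_def_A hA] at hz1 hz2
              rw [← hz2, GIS.elm.injEq] at hz1
              exact elm_ext rfl hz1.2
            · by_cases hB : v₁.start = u₂.start ∧ u₂.edges <+: v₁.edges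
              · rw [mul_def_B hA hB] at hz1 hz2
                rw [← hz2, GIS.elm.injEq] at hz1
                refine elm_ext rfl (GPath.ext' ?_ ?_)
                · have := congrArg GPath.start hz1.2
                  simpa using this
                · have := congrArg GPath.edges hz1.2
                  simp only [comp_edges] at this
                  exact List.append_cancel_right this
              · rw [mul_def_0 hA hB] at hz1; exact absurd hz1.symm hy

/-- Fibers of right translations over nonzero elements are finite. -/
theorem mul_right_fiber_finite (x y : GIS Q) (hy : y ≠ GIS.zero) :
    {z | GIS.mul z x = y}.Finite := by
  have hy' : y.inv ≠ GIS.zero := fun hc => hy (inv_eq_zero_iff.mp hc)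
  have hset : {z | GIS.mul z x = y} = GIS.inv ⁻¹' {w | GIS.mul x.inv w = y.inv} := by
    ext z
    simp only [Set.mem_setOf_eq, Set.mem_preimage]
    constructor
    · intro h; rw [← h, inv_mul']
    · intro h
      have := congrArg GIS.inv h
      rw [← inv_mul', inv_inv', inv_inv'] at this
      exact this
  rw [hset]
  exact Set.Finite.preimage inv_injective.injOn (mul_left_fiber_finite _ _ hy')

theorem cof_isOpen_iff {U : Set (GIS Q)} :
    IsOpen[cofTop Q] U ↔ ((0 : GIS Q) ∈ U → Uᶜ.Finite) := Iff.rfl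

/-- A map fixing `0` with finite fibers over nonzero points is `cofTop`-continuous. -/
theorem cof_continuous_of_fibers {f : GIS Q → GIS Q} (h0 : f GIS.zero = GIS.zero)
    (hf : ∀ y, y ≠ GIS.zero → {x | f x = y}.Finite) :
    @Continuous _ _ (cofTop Q) (cofTop Q) f := by
  rw [@continuous_def _ _ (cofTop Q) (cofTop Q)]
  intro U hU
  rw [cof_isOpen_iff] at hU ⊢
  intro h0U
  have h0U' : (0 : GIS Q) ∈ U := by
    have : f (0 : GIS Q) ∈ U := h0U
    rwa [show f (0 : GIS Q) = 0 from h0] at this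
  have hUc : Uᶜ.Finite := hU h0U'
  have : (f ⁻¹' U)ᶜ = ⋃ y ∈ Uᶜ, {x | f x = y} := by
    ext x
    simp only [Set.mem_compl_iff, Set.mem_preimage, Set.mem_iUnion, Set.mem_setOf_eq,
      exists_prop]
    exact ⟨fun hx => ⟨f x, hx, rfl⟩, fun ⟨y, hy, hfy⟩ => hfy ▸ hy⟩
  rw [this]
  exact hUc.biUnion fun y hy => hf y (fun hc => hy (hc ▸ h0U'))

theorem cof_isolated {x : GIS Q} (hx : x ≠ GIS.zero) : IsOpen[cofTop Q] {x} := by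
  rw [cof_isOpen_iff]
  intro h0
  exact absurd (Set.mem_singleton_iff.mp h0).symm hx

theorem cof_t2 : @T2Space (GIS Q) (cofTop Q) := by
  letI := cofTop Q
  refine ⟨fun x y hxy => ?_⟩
  by_cases hx : x = GIS.zero
  · subst hx
    refine ⟨{y}ᶜ, {y}, ?_, cof_isolated (Ne.symm hxy), hxy, rfl, ?_⟩
    · rw [cof_isOpen_iff, compl_compl]
      exact fun _ => Set.finite_singleton y
    · simp
  · by_cases hy : y = GIS.zero
    · subst hy
      refine ⟨{x}, {x}ᶜ, cof_isolated hx, ?_, rfl, hxy.symm, ?_⟩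
      · rw [cof_isOpen_iff, compl_compl]
        exact fun _ => Set.finite_singleton x
      · simp
    · exact ⟨{x}, {y}, cof_isolated hx, cof_isolated hy, rfl, rfl, by simp [hxy]⟩

theorem cof_compact : @CompactSpace (GIS Q) (cofTop Q) := by
  letI := cofTop Q
  refine ⟨?_⟩
  rw [isCompact_iff_finite_subcover]
  intro ι U hUo hcov
  obtain ⟨i₀, hi₀⟩ : ∃ i, (0 : GIS Q) ∈ U i := by
    have := hcov (Set.mem_univ (0 : GIS Q))
    simpa using this
  have hfin : (U i₀)ᶜ.Finite := (cof_isOpen_iff.mp (hUo i₀)) hi₀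
  classical
  choose g hg using fun x (hx : x ∈ Set.univ) => Set.mem_iUnion.mp (hcov hx)
  refine ⟨insert i₀ (hfin.toFinset.image fun x => g x (Set.mem_univ x)), fun x _ => ?_⟩
  by_cases hxU : x ∈ U i₀
  · exact Set.mem_biUnion (Finset.mem_insert_self _ _) hxU
  · refine Set.mem_biUnion (Finset.mem_insert_of_mem ?_) (hg x (Set.mem_univ x))
    exact Finset.mem_image_of_mem _ (hfin.mem_toFinset.mpr hxU)

theorem cof_ne_bot (hinf : Infinite (GIS Q)) : cofTop Q ≠ ⊥ := by
  intro h
  have hop : IsOpen[cofTop Q] {(0 : GIS Q)} := by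
    rw [h]
    letI : TopologicalSpace (GIS Q) := ⊥
    haveI : DiscreteTopology (GIS Q) := ⟨rfl⟩
    exact isOpen_discrete _
  have hfin : Set.Finite ({(0 : GIS Q)}ᶜ : Set (GIS Q)) := (cof_isOpen_iff.mp hop) rfl
  haveI := hinf
  exact Set.infinite_univ (by
    rw [← Set.union_compl_self {(0 : GIS Q)}]
    exact (Set.finite_singleton _).union hfin)

theorem cof_mul_left_continuous (a : GIS Q) :
    @Continuous _ _ (cofTop Q) (cofTop Q) (fun x => GIS.mul a x) :=
  cof_continuous_of_fibers (mul_zero' a) (fun y hy => mul_left_fiber_finite a y hy)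

theorem cof_mul_right_continuous (a : GIS Q) :
    @Continuous _ _ (cofTop Q) (cofTop Q) (fun x => GIS.mul x a) :=
  cof_continuous_of_fibers (zero_mul' a) (fun y hy => mul_right_fiber_finite a y hy)

theorem cof_inv_continuous :
    @Continuous _ _ (cofTop Q) (cofTop Q) (GIS.inv : GIS Q → GIS Q) := by
  refine cof_continuous_of_fibers rfl (fun y hy => ?_)
  have : {x | GIS.inv x = y} = {y.inv} := by
    ext x
    simp only [Set.mem_setOf_eq, Set.mem_singleton_iff]
    constructor
    · intro h; rw [← h, inv_inv']
    · intro h; rw [h, inv_inv']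
  rw [this]
  exact Set.finite_singleton _

/-- The set of elements `u v⁻¹` with `s(u) = s(v) = a`. -/
def Sa (Q : DGraph) (a : Q.V) : Set (GIS Q) :=
  {y | ∃ u v h, y = GIS.elm u v h ∧ u.start = a ∧ v.start = a}

theorem Sa_nonzero {a : Q.V} {y : GIS Q} (hy : y ∈ Sa Q a) : y ≠ GIS.zero := by
  obtain ⟨u, v, h, rfl, -, -⟩ := hy
  exact fun hc => by cases hc

theorem eV_mem_Sa (a : Q.V) : eV Q a ∈ Sa Q a :=
  ⟨_, _, rfl, rfl, rfl, rfl⟩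

/-- The retraction `y ↦ e_a y e_a`. -/
noncomputable def sigmaE (Q : DGraph) (a : Q.V) (y : GIS Q) : GIS Q :=
  GIS.mul (GIS.mul (eV Q a) y) (eV Q a)

theorem sigma_of_mem {a : Q.V} {y : GIS Q} (hy : y ∈ Sa Q a) : sigmaE Q a y = y := by
  obtain ⟨u, v, h, rfl, hu, hv⟩ := hy
  rw [sigmaE, eV_mul_elm hu, elm_mul_eV hv]

theorem sigma_cases (a : Q.V) (y : GIS Q) :
    sigmaE Q a y = GIS.zero ∨ (y ∈ Sa Q a ∧ sigmaE Q a y = y) := by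
  cases y with
  | zero => left; rw [sigmaE, mul_zero', zero_mul']
  | elm u v h =>
    by_cases hu : u.start = a
    · by_cases hv : v.start = a
      · exact Or.inr ⟨⟨u, v, h, rfl, hu, hv⟩, sigma_of_mem ⟨u, v, h, rfl, hu, hv⟩⟩
      · left; rw [sigmaE, eV_mul_elm hu, elm_mul_eV_zero hv]
    · left; rw [sigmaE, eV_mul_elm_zero hu, zero_mul']

/-- In a T1 space, a member of a finite open set is isolated. -/
theorem open_singleton_of_finite_open {X : Type*} [TopologicalSpace X] [T1Space X]
    {s : Set X} (ho : IsOpen s) (hf : s.Finite) {x : X} (hx : x ∈ s) :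
    IsOpen ({x} : Set X) := by
  have hcl : IsClosed (s \ {x}) := (hf.subset Set.diff_subset).isClosed
  have : IsOpen (s ∩ (s \ {x})ᶜ) := ho.inter hcl.isOpen_compl
  have heq : s ∩ (s \ {x})ᶜ = {x} := by
    ext y
    constructor
    · rintro ⟨hys, hyn⟩
      by_contra hyx
      exact hyn ⟨hys, hyx⟩
    · rintro rfl
      exact ⟨hx, fun hc => hc.2 rfl⟩
  rwa [heq] at this

section Unique

variable (t : TopologicalSpace (GIS Q))

theorem eV_isolated (ht2 : @T2Space _ t) (hcomp : @CompactSpace _ t)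
    (hcont : ∀ a : GIS Q, @Continuous _ _ t t (fun x : GIS Q => GIS.mul a x) ∧
      @Continuous _ _ t t (fun x : GIS Q => GIS.mul x a)) (a : Q.V) :
    IsOpen[t] {eV Q a} := by
  letI := t
  haveI := ht2
  haveI := hcomp
  by_contra hniso
  -- every open neighbourhood of `e_a` contains another point
  have hpick : ∀ U : Set (GIS Q), IsOpen U → eV Q a ∈ U → ∃ y ∈ U, y ≠ eV Q a := by
    intro U hU haU
    by_contra hc
    push_neg at hc
    have : U = {eV Q a} := subset_antisymm (fun y hy => hc y hy) (by
      rintro y rfl; exact haU)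
    exact hniso (this ▸ hU)
  -- continuity of the retraction
  have hsig : Continuous (sigmaE Q a) :=
    ((hcont (eV Q a)).2).comp ((hcont (eV Q a)).1)
  -- separation from zero
  have hsep : ∀ x : GIS Q, x ≠ GIS.zero →
      ∃ V : Set (GIS Q), IsOpen V ∧ x ∈ V ∧ GIS.zero ∉ V := by
    intro x hx
    obtain ⟨V, W, hV, hW, hxV, h0W, hVW⟩ := t2_separation hx
    exact ⟨V, hV, hxV, fun h0 => Set.disjoint_left.mp hVW h0 h0W⟩
  -- every open neighbourhood of `e_a` meets `Sa \ {e_a}`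
  have hC : ∀ U : Set (GIS Q), IsOpen U → eV Q a ∈ U →
      ∃ y, y ∈ Sa Q a ∧ y ≠ eV Q a ∧ y ∈ U := by
    intro U hU haU
    obtain ⟨V, hV, heV, h0V⟩ := hsep (eV Q a) (eV_ne_zero a)
    have hO : IsOpen (sigmaE Q a ⁻¹' (U ∩ V)) := (hU.inter hV).preimage hsig
    have haO : eV Q a ∈ sigmaE Q a ⁻¹' (U ∩ V) := by
      have : sigmaE Q a (eV Q a) = eV Q a := sigma_of_mem (eV_mem_Sa a)
      simp only [Set.mem_preimage, this]
      exact ⟨haU, heV⟩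
    obtain ⟨y, hyO, hy⟩ := hpick _ hO haO
    rcases sigma_cases a y with h0 | ⟨hySa, hyy⟩
    · exact absurd (h0 ▸ hyO.2) h0V
    · have hyUV : sigmaE Q a y ∈ U ∩ V := hyO
      rw [hyy] at hyUV
      exact ⟨y, hySa, hy, hyUV.1⟩
  -- no element fixed by right multiplication by `e_a` is isolated
  have hfix : ∀ x : GIS Q, x ≠ GIS.zero → GIS.mul x (eV Q a) = x →
      ¬ IsOpen ({x} : Set (GIS Q)) := by
    intro x hx hxe hxo
    have hVo : IsOpen ((fun y => GIS.mul x y) ⁻¹' {x}) := hxo.preimage (hcont x).1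
    have hVfin : ((fun y => GIS.mul x y) ⁻¹' {x}).Finite := mul_left_fiber_finite x x hx
    have heV : eV Q a ∈ (fun y => GIS.mul x y) ⁻¹' {x} := hxe
    exact hniso (open_singleton_of_finite_open hVo hVfin heV)
  by_cases hbr : ∃ q₀ q₁ : GPath Q, q₀.start = a ∧ q₁.start = a ∧
      ¬(q₀.edges <+: q₁.edges) ∧ ¬(q₁.edges <+: q₀.edges)
  · -- branching case
    obtain ⟨q₀, q₁, hq₀, hq₁, h01, h10⟩ := hbr
    have hNM : ∀ q : GPath Q, q.start = a →
        IsOpen ((fun y => GIS.mul (rP q) y) ⁻¹' {GIS.zero}ᶜ) ∧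
        eV Q a ∈ (fun y => GIS.mul (rP q) y) ⁻¹' {GIS.zero}ᶜ ∧
        IsOpen ((fun y => GIS.mul y (lP q)) ⁻¹' {GIS.zero}ᶜ) ∧
        eV Q a ∈ (fun y => GIS.mul y (lP q)) ⁻¹' {GIS.zero}ᶜ := by
      intro q hq
      refine ⟨isClosed_singleton.isOpen_compl.preimage (hcont _).1, ?_,
        isClosed_singleton.isOpen_compl.preimage (hcont _).2, ?_⟩
      · show GIS.mul (rP q) (eV Q a) ∉ ({GIS.zero} : Set (GIS Q))
        rw [show GIS.mul (rP q) (eV Q a) = GIS.elm (GPath.triv Q q.rng) q rfl from elm_mul_eV hq]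
        exact fun hc => zero_ne_elm (Set.mem_singleton_iff.mp hc).symm
      · show GIS.mul (eV Q a) (lP q) ∉ ({GIS.zero} : Set (GIS Q))
        rw [show GIS.mul (eV Q a) (lP q) = GIS.elm q (GPath.triv Q q.rng) rfl from eV_mul_elm hq]
        exact fun hc => zero_ne_elm (Set.mem_singleton_iff.mp hc).symm
    set P : Set (GIS Q) := {y | ∃ u v h, y = GIS.elm u v h ∧ u.start = a ∧ v.start = a ∧
      u.edges <+: q₀.edges ∧ v.edges <+: q₀.edges} with hP
    have hPfin : P.Finite := by
      refine Set.Finite.of_finite_image (f := fun y => (lE y, rE y)) ?_ ?_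
      · refine Set.Finite.subset
          ((q₀.edges.inits.finite_toSet).prod (q₀.edges.inits.finite_toSet)) ?_
        rintro b ⟨z, ⟨u, v, h, rfl, -, -, hu, hv⟩, rfl⟩
        exact ⟨(List.mem_inits _ _).mpr hu, (List.mem_inits _ _).mpr hv⟩
      · rintro z1 ⟨u1, v1, h1, rfl, hu1, hv1, -, -⟩ z2 ⟨u2, v2, h2, rfl, hu2, hv2, -, -⟩ he
        have he1 : u1.edges = u2.edges := congrArg Prod.fst he
        have he2 : v1.edges = v2.edges := congrArg Prod.snd he
        exact elm_ext (GPath.ext' (hu1.trans hu2.symm) he1)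
          (GPath.ext' (hv1.trans hv2.symm) he2)
    have hPcl : IsClosed (P \ {eV Q a}) := (hPfin.subset Set.diff_subset).isClosed
    obtain ⟨hN0o, hN0e, hM0o, hM0e⟩ := hNM q₀ hq₀
    obtain ⟨hN1o, hN1e, hM1o, hM1e⟩ := hNM q₁ hq₁
    obtain ⟨y, hySa, hyne, hyO⟩ := hC _
      ((((hN0o.inter hN1o).inter hM0o).inter hM1o).inter hPcl.isOpen_compl)
      ⟨⟨⟨⟨hN0e, hN1e⟩, hM0e⟩, hM1e⟩, fun hc => hc.2 rfl⟩
    obtain ⟨⟨⟨⟨hyN0, hyN1⟩, hyM0⟩, hyM1⟩, hyP⟩ := hyO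
    obtain ⟨u, v, h, rfl, hu, hv⟩ := hySa
    have hcases : ∀ q : GPath Q,
        GIS.mul (rP q) (GIS.elm u v h) ≠ GIS.zero →
        q.edges <+: u.edges ∨ u.edges <+: q.edges := by
      intro q hq
      exact (mul_ne_zero_cases (by rw [rP] at hq; exact hq)).2
    have hcasesR : ∀ q : GPath Q,
        GIS.mul (GIS.elm u v h) (lP q) ≠ GIS.zero →
        v.edges <+: q.edges ∨ q.edges <+: v.edges := by
      intro q hq
      exact (mul_ne_zero_cases (by rw [lP] at hq; exact hq)).2
    have comb : ∀ l : List Q.E, (q₀.edges <+: l ∨ l <+: q₀.edges) →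
        (q₁.edges <+: l ∨ l <+: q₁.edges) → l <+: q₀.edges := by
      intro l hl0 hl1
      rcases hl0 with h0 | h0
      · rcases hl1 with h1 | h1
        · rcases List.prefix_or_prefix_of_prefix h0 h1 with hc | hc
          · exact absurd hc h01
          · exact absurd hc h10
        · exact absurd (h0.trans h1) h01
      · exact h0
    have hucmp : u.edges <+: q₀.edges :=
      comb u.edges (hcases q₀ hyN0) (hcases q₁ hyN1)
    have hvcmp : v.edges <+: q₀.edges := by
      refine comb v.edges ?_ ?_
      · rcases hcasesR q₀ hyM0 with h' | h'
        · exact Or.inr h'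
        · exact Or.inl h'
      · rcases hcasesR q₁ hyM1 with h' | h'
        · exact Or.inr h'
        · exact Or.inl h'
    exact hyP ⟨⟨u, v, h, rfl, hu, hv, hucmp, hvcmp⟩, hyne⟩
  · -- chain case: all paths from `a` are comparable
    push_neg at hbr
    set K : Set (GIS Q) := Set.range (sigmaE Q a) with hK
    have hKcp : IsCompact K := isCompact_range hsig
    have hKcl : IsClosed K := hKcp.isClosed
    have hKeq : K = Sa Q a ∪ {GIS.zero} := by
      ext y
      constructor
      · rintro ⟨z, rfl⟩
        rcases sigma_cases a z with h0 | ⟨hz, hzz⟩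
        · rw [h0]; exact Or.inr rfl
        · rw [hzz]; exact Or.inl hz
      · rintro (hy | rfl)
        · exact ⟨y, sigma_of_mem hy⟩
        · exact ⟨GIS.zero, by rw [sigmaE, mul_zero', zero_mul']⟩
    have hSacnt : (Sa Q a).Countable := by
      rw [Set.countable_iff_exists_injOn]
      refine ⟨fun y => Nat.pair (lE y).length (rE y).length, ?_⟩
      rintro y1 ⟨u1, v1, hh1, rfl, hu1, hv1⟩ y2 ⟨u2, v2, hh2, rfl, hu2, hv2⟩ he
      have hlen := Nat.pair_eq_pair.mp he
      have heq : ∀ (p q : GPath Q), p.start = a → q.start = a →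
          p.edges.length = q.edges.length → p.edges = q.edges := by
        intro p q hp hq hl
        by_cases hpq : p.edges <+: q.edges
        · exact hpq.eq_of_length hl
        · exact ((hbr p q hp hq hpq).eq_of_length hl.symm).symm
      exact elm_ext (GPath.ext' (hu1.trans hu2.symm) (heq u1 u2 hu1 hu2 hlen.1))
        (GPath.ext' (hv1.trans hv2.symm) (heq v1 v2 hv1 hv2 hlen.2))
    -- no point of `Sa` is relatively isolated in `K`
    have hNI : ∀ z ∈ Sa Q a, ∀ U : Set (GIS Q), IsOpen U → U ∩ K = {z} → False := by
      intro z hz U hU hUK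
      obtain ⟨V, hV, hzV, h0V⟩ := hsep z (Sa_nonzero hz)
      have hO : IsOpen (sigmaE Q a ⁻¹' (U ∩ V)) := (hU.inter hV).preimage hsig
      have hzK : z ∈ K := by rw [hKeq]; exact Or.inl hz
      have hzU : z ∈ U := by
        have : z ∈ U ∩ K := by rw [hUK]; rfl
        exact this.1
      have hzO : z ∈ sigmaE Q a ⁻¹' (U ∩ V) := by
        simp only [Set.mem_preimage, sigma_of_mem hz]
        exact ⟨hzU, hzV⟩
      have hOsub : sigmaE Q a ⁻¹' (U ∩ V) ⊆ {z} := by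
        intro y hy
        rcases sigma_cases a y with h0 | ⟨hySa, hyy⟩
        · exact absurd (h0 ▸ hy.2) h0V
        · have hyUV : sigmaE Q a y ∈ U ∩ V := hy
          rw [hyy] at hyUV
          have hyU : y ∈ U := hyUV.1
          have hyK : y ∈ K := by rw [hKeq]; exact Or.inl hySa
          rw [← hUK]
          exact ⟨hyU, hyK⟩
      have : ({z} : Set (GIS Q)) = sigmaE Q a ⁻¹' (U ∩ V) :=
        subset_antisymm (by rintro w rfl; exact hzO) hOsub
      obtain ⟨u, v, hh, rfl, hu, hv⟩ := hz
      exact hfix _ (fun hc => by cases hc) (elm_mul_eV hv) (this ▸ hO)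
    -- find a relatively isolated point of a compact countable set, via Baire
    have extract : ∀ S : Set (GIS Q), IsCompact S → S.Countable → S.Nonempty →
        ∃ w W, w ∈ S ∧ IsOpen W ∧ W ∩ S = {w} := by
      intro S hcp hcnt hne
      haveI : CompactSpace ↥S := isCompact_iff_compactSpace.mp hcp
      haveI : Countable ↥S := hcnt.to_subtype
      haveI : Nonempty ↥S := hne.to_subtype
      obtain ⟨x, hx⟩ := nonempty_interior_of_iUnion_of_closed
        (f := fun x : ↥S => ({x} : Set ↥S)) (fun _ => isClosed_singleton)
        (Set.iUnion_of_singleton _)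
      have hint : interior ({x} : Set ↥S) = {x} := by
        obtain ⟨w, hw⟩ := hx
        have hwx : w ∈ ({x} : Set ↥S) := interior_subset hw
        rw [Set.mem_singleton_iff] at hwx
        subst hwx
        refine subset_antisymm interior_subset ?_
        rintro y rfl
        exact hw
      have hxo : IsOpen ({x} : Set ↥S) := hint ▸ isOpen_interior
      rw [isOpen_induced_iff] at hxo
      obtain ⟨W, hWo, hWeq⟩ := hxo
      refine ⟨x.val, W, x.2, hWo, ?_⟩
      have hxW : (x : GIS Q) ∈ W := by
        have : x ∈ (Subtype.val ⁻¹' W : Set ↥S) := by rw [hWeq]; rfl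
        exact this
      refine subset_antisymm ?_ ?_
      · rintro y ⟨hyW, hyS⟩
        have : (⟨y, hyS⟩ : ↥S) ∈ (Subtype.val ⁻¹' W : Set ↥S) := hyW
        rw [hWeq] at this
        exact congrArg Subtype.val this
      · rintro y rfl
        exact ⟨hxW, x.2⟩
    have hKcnt : K.Countable := by
      rw [hKeq]; exact hSacnt.union (Set.countable_singleton _)
    obtain ⟨w, W, hwK, hWo, hWK⟩ := extract K hKcp hKcnt
      ⟨eV Q a, by rw [hKeq]; exact Or.inl (eV_mem_Sa a)⟩
    have hwmem : w ∈ Sa Q a ∪ {GIS.zero} := hKeq ▸ hwK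
    rcases hwmem with hwSa | hw0
    · exact hNI w hwSa W hWo hWK
    · -- the isolated point is `0`; then `Sa` itself is compact, apply Baire again
      have hw0' : w = GIS.zero := hw0
      subst hw0'
      have hSaK : Sa Q a ⊆ K := by rw [hKeq]; exact Set.subset_union_left
      have hSaeq : Sa Q a = K ∩ Wᶜ := by
        ext y
        constructor
        · intro hySa
          refine ⟨hSaK hySa, fun hyW => ?_⟩
          have : y ∈ W ∩ K := ⟨hyW, hSaK hySa⟩
          rw [hWK] at this
          exact Sa_nonzero hySa this
        · rintro ⟨hyK, hyW⟩
          rcases hKeq ▸ hyK with hy | hy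
          · exact hy
          · have h0W : GIS.zero ∈ W := by
              have : GIS.zero ∈ ({GIS.zero} : Set (GIS Q)) := rfl
              rw [← hWK] at this
              exact this.1
            rw [Set.mem_singleton_iff] at hy
            exact absurd (hy ▸ h0W) hyW
      have hSacl : IsClosed (Sa Q a) := by
        rw [hSaeq]; exact hKcl.inter hWo.isClosed_compl
      have hSacp : IsCompact (Sa Q a) := hKcp.of_isClosed_subset hSacl hSaK
      obtain ⟨z, W', hzSa, hW'o, hW'Sa⟩ := extract (Sa Q a) hSacp hSacnt
        ⟨eV Q a, eV_mem_Sa a⟩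
      refine hNI z hzSa (W' ∩ {GIS.zero}ᶜ) (hW'o.inter isClosed_singleton.isOpen_compl) ?_
      have hKd : {GIS.zero}ᶜ ∩ K = Sa Q a := by
        rw [hKeq]
        ext y
        constructor
        · rintro ⟨hy0, hy | hy⟩
          · exact hy
          · exact absurd hy hy0
        · intro hy
          exact ⟨fun hc => Sa_nonzero hy hc, Or.inl hy⟩
      rw [Set.inter_assoc, hKd]
      exact hW'Sa

theorem nonzero_isolated (ht2 : @T2Space _ t) (hcomp : @CompactSpace _ t)
    (hcont : ∀ a : GIS Q, @Continuous _ _ t t (fun x : GIS Q => GIS.mul a x) ∧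
      @Continuous _ _ t t (fun x : GIS Q => GIS.mul x a))
    (x : GIS Q) (hx : x ≠ GIS.zero) : IsOpen[t] {x} := by
  letI := t
  haveI := ht2
  haveI := hcomp
  cases x with
  | zero => exact absurd rfl hx
  | elm u v h =>
    have hiso := eV_isolated t ht2 hcomp hcont u.rng
    have hcchi : Continuous (fun y => GIS.mul (GIS.mul (rP u) y) (lP v)) :=
      ((hcont (lP v)).2).comp ((hcont (rP u)).1)
    set F := (fun y => GIS.mul (GIS.mul (rP u) y) (lP v)) ⁻¹' {eV Q u.rng} with hF
    have hFo : IsOpen F := hiso.preimage hcchi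
    have hxF : GIS.elm u v h ∈ F := by
      rw [hF]
      show GIS.mul (GIS.mul (rP u) (GIS.elm u v h)) (lP v) ∈ ({eV Q u.rng} : Set (GIS Q))
      rw [chi_self]
      rfl
    have hFfin : F.Finite := by
      have hZ : {z | GIS.mul z (lP v) = eV Q u.rng}.Finite :=
        mul_right_fiber_finite (lP v) (eV Q u.rng) (eV_ne_zero _)
      have hFeq : F = ⋃ z ∈ {z | GIS.mul z (lP v) = eV Q u.rng},
          {y | GIS.mul (rP u) y = z} := by
        ext y
        simp only [hF, Set.mem_preimage, Set.mem_singleton_iff, Set.mem_iUnion,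
          Set.mem_setOf_eq, exists_prop]
        exact ⟨fun hy => ⟨GIS.mul (rP u) y, hy, rfl⟩, fun ⟨z, hz, hyz⟩ => hyz ▸ hz⟩
      rw [hFeq]
      refine hZ.biUnion fun z hz => ?_
      have hz0 : z ≠ GIS.zero := by
        intro hc
        rw [Set.mem_setOf_eq, hc, zero_mul'] at hz
        exact eV_ne_zero _ hz.symm
      exact mul_left_fiber_finite _ _ hz0
    exact open_singleton_of_finite_open hFo hFfin hxF

theorem unique_topology (ht2 : @T2Space _ t) (hcomp : @CompactSpace _ t)
    (hcont : ∀ a : GIS Q, @Continuous _ _ t t (fun x : GIS Q => GIS.mul a x) ∧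
      @Continuous _ _ t t (fun x : GIS Q => GIS.mul x a)) :
    t = cofTop Q := by
  letI := t
  haveI := ht2
  haveI := hcomp
  refine TopologicalSpace.ext_iff.mpr fun U => ?_
  constructor
  · intro hU
    rw [cof_isOpen_iff]
    intro h0U
    have hUc : IsCompact Uᶜ := hU.isClosed_compl.isCompact
    classical
    have hcov : Uᶜ ⊆ ⋃ y : GIS Q, (if y = GIS.zero then ∅ else {y} : Set (GIS Q)) := by
      intro x hx
      have hx0 : x ≠ GIS.zero := fun hc => hx (by rw [hc]; exact h0U)
      exact Set.mem_iUnion.mpr ⟨x, by simp [hx0]⟩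
    obtain ⟨s, hs⟩ := hUc.elim_finite_subcover _ (fun y : GIS Q => by
      by_cases hy : y = GIS.zero
      · simp only [hy, if_pos rfl]
        exact isOpen_empty
      · simp only [if_neg hy]
        exact nonzero_isolated t ht2 hcomp hcont y hy) hcov
    refine Set.Finite.subset s.finite_toSet ?_
    intro z hz
    obtain ⟨y, hys, hzy⟩ := Set.mem_iUnion₂.mp (hs hz)
    by_cases hy : y = GIS.zero
    · rw [if_pos hy] at hzy
      exact absurd hzy (Set.notMem_empty z)
    · rw [if_neg hy] at hzy
      rw [Set.mem_singleton_iff.mp hzy]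
      exact hys
  · intro hU
    rw [cof_isOpen_iff] at hU
    by_cases h0 : (0 : GIS Q) ∈ U
    · have hUc : Uᶜ.Finite := hU h0
      have := hUc.isClosed.isOpen_compl
      rwa [compl_compl] at this
    · rw [← Set.biUnion_of_singleton U]
      exact isOpen_biUnion fun x hx =>
        nonzero_isolated t ht2 hcomp hcont x (fun hc => h0 (by rw [show (0 : GIS Q) = x from hc.symm]; exact hx))

end Unique

end DGraph

theorem stmt9 (Q : DGraph) (hinf : Infinite (GIS Q)) :
    (@T2Space (GIS Q) (cofTop Q) ∧ @CompactSpace (GIS Q) (cofTop Q) ∧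
      cofTop Q ≠ ⊥ ∧
      (∀ a : GIS Q, @Continuous _ _ (cofTop Q) (cofTop Q) (fun x => a * x) ∧
        @Continuous _ _ (cofTop Q) (cofTop Q) (fun x => x * a)) ∧
      @Continuous _ _ (cofTop Q) (cofTop Q) GIS.inv) ∧
    ∀ t : TopologicalSpace (GIS Q),
      (@T2Space (GIS Q) t ∧ @CompactSpace (GIS Q) t ∧ t ≠ ⊥ ∧
        ∀ a : GIS Q, @Continuous _ _ t t (fun x => a * x) ∧
          @Continuous _ _ t t (fun x => x * a)) → t = cofTop Q := by
  constructor
  · exact ⟨cof_t2, cof_compact, cof_ne_bot hinf,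
      fun a => ⟨cof_mul_left_continuous a, cof_mul_right_continuous a⟩,
      cof_inv_continuous⟩
  · rintro t ⟨ht2, hcomp, -, hcont⟩
    exact unique_topology t ht2 hcomp hcont
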